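/- Let d ≥ 2 and k ≥ 2 be integers and let c ∈ ℝ. For R > 0 define v_k(R) := R(d−1) + (k−1)·log(R(d−1)) − log( (k−1)!·2^{d−1}(d−1)/ω_d ) and for u ∈ ℝ define ρ_R(u) := e^{−u} · ( ω_d ∫_0^R sinh(s)^{d−1} ds ) · (2^{d−1}(d−1) e^{−R(d−1)}/ω_d) · ( (u + v_k(R)) / (R(d−1)) )^{k−1}. Then there exist constants C > 0 and R₀ > 0, depending only on d, k and c, such that for all R ≥ R₀ one has ∫_c^∞ | ρ_R(u) − e^{−u} | du ≤ C · (log R)/R. -/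

import Mathlib

/-!
With `m = d - 1`, `n = k - 1`, `a = R m` and `s = u - c`, the density factors as
`ρ_R(u) = e^{-u} A_R (1 + t)^n` with `t = (s + W_R - 1) / a`, where `A_R ∈ [0, 1]` is the ratio
of `H^d(B_R)` to its leading term `ω_d e^{mR} / (m 2^m)` and `W_R = 1 + c + v_k(R) - a = O(log R)`.
Comparing `sinh^m` with `e^{m s} / 2^m` (Bernoulli) gives `1 - A_R = O(1 / R)`. Since
`(1 + t)^n - 1 ≤ n t e^{n t}` and `n t ≤ s / 2 + 1` for large `R`, the defect
`e^{-s} |A_R (1 + t)^n - 1|` is `O(log R / R) e^{-s/4}`, which is integrable over `s > 0`.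
-/

open Real

/-- Surface area of the (d-1)-dimensional Euclidean unit sphere. -/
noncomputable def omegaSphere (d : ℕ) : ℝ :=
  2 * Real.pi ^ ((d : ℝ) / 2) / Real.Gamma ((d : ℝ) / 2)

/-- Volume of a hyperbolic ball of radius `R` in `d`-dimensional hyperbolic space. -/
noncomputable def hypBallVol (d : ℕ) (R : ℝ) : ℝ :=
  omegaSphere d * ∫ s in (0:ℝ)..R, Real.sinh s ^ (d - 1)

/-- The threshold `v_k(R)`. -/
noncomputable def vThreshold (d k : ℕ) (R : ℝ) : ℝ :=
  R * ((d : ℝ) - 1) + ((k : ℝ) - 1) * Real.log (R * ((d : ℝ) - 1)) -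
    Real.log (((k - 1).factorial : ℝ) * 2 ^ (d - 1) * ((d : ℝ) - 1) / omegaSphere d)

/-- The Lebesgue density of the intensity measure of the exceedance point process. -/
noncomputable def rhoDensity (d k : ℕ) (R u : ℝ) : ℝ :=
  Real.exp (-u) * hypBallVol d R *
    (2 ^ (d - 1) * ((d : ℝ) - 1) * Real.exp (-R * ((d : ℝ) - 1)) / omegaSphere d) *
    ((u + vThreshold d k R) / (R * ((d : ℝ) - 1))) ^ (k - 1)

open MeasureTheory Filter

/-- `H^d(B_R)` divided by its leading asymptotics `ω_d e^{mR} / (m 2^m)`, where `m = d - 1`. -/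
noncomputable def volRatio (m : ℕ) (R : ℝ) : ℝ :=
  2 ^ m * m * exp (-(m * R)) * ∫ s in (0:ℝ)..R, sinh s ^ m

lemma integral_exp_const_mul {b : ℝ} (hb : b ≠ 0) (R : ℝ) :
    ∫ s in (0:ℝ)..R, exp (b * s) = (exp (b * R) - 1) / b := by
  rw [intervalIntegral.integral_comp_mul_left exp hb, integral_exp, smul_eq_mul, mul_zero,
    exp_zero, inv_mul_eq_div]

lemma sinh_pow_le (m : ℕ) {s : ℝ} (hs : 0 ≤ s) : sinh s ^ m ≤ exp (m * s) / 2 ^ m := by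
  have hsinh : sinh s ≤ exp s / 2 := by rw [sinh_eq]; linarith [exp_pos (-s)]
  calc sinh s ^ m ≤ (exp s / 2) ^ m := pow_le_pow_left₀ (sinh_nonneg_iff.2 hs) hsinh m
    _ = exp (m * s) / 2 ^ m := by rw [div_pow, exp_nat_mul]

lemma le_sinh_pow (m : ℕ) {s : ℝ} (hs : 0 ≤ s) :
    exp (m * s) / 2 ^ m - m * exp ((m - 2) * s) / 2 ^ m ≤ sinh s ^ m := by
  have hq : exp (-2 * s) ≤ 1 := exp_le_one_iff.2 (by linarith)
  -- `sinh s = (e^s / 2) (1 - e^{-2s})`, and Bernoulli's inequality bounds the second factor.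
  have hsinh : sinh s = exp s / 2 * (1 - exp (-2 * s)) := by
    rw [sinh_eq, mul_sub, mul_one, div_mul_eq_mul_div, ← exp_add]; ring_nf
  have hbern : 1 - m * exp (-2 * s) ≤ (1 - exp (-2 * s)) ^ m := by
    simpa [sub_eq_add_neg] using one_add_mul_le_pow (a := -exp (-2 * s)) (by linarith) m
  calc exp (m * s) / 2 ^ m - m * exp ((m - 2) * s) / 2 ^ m
      = exp (m * s) / 2 ^ m * (1 - m * exp (-2 * s)) := by
        rw [show ((m:ℝ) - 2) * s = m * s + -2 * s by ring, exp_add]; ring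
    _ ≤ exp (m * s) / 2 ^ m * (1 - exp (-2 * s)) ^ m := by gcongr
    _ = sinh s ^ m := by rw [hsinh, mul_pow, div_pow, exp_nat_mul]

lemma mul_integral_sinh_pow_le {m : ℕ} (hm : m ≠ 0) {R : ℝ} (hR : 0 ≤ R) :
    m * 2 ^ m * ∫ s in (0:ℝ)..R, sinh s ^ m ≤ exp (m * R) - 1 := by
  have hmono : ∫ s in (0:ℝ)..R, sinh s ^ m ≤ ∫ s in (0:ℝ)..R, exp (m * s) / 2 ^ m :=
    intervalIntegral.integral_mono_on hR
      ((by fun_prop : Continuous _).intervalIntegrable _ _)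
      ((by fun_prop : Continuous _).intervalIntegrable _ _)
      fun s hs => sinh_pow_le m hs.1
  rw [intervalIntegral.integral_div, integral_exp_const_mul (by positivity), div_div,
    le_div_iff₀ (by positivity)] at hmono
  linarith

lemma exp_sub_le_mul_integral_sinh_pow {m : ℕ} (hm : 1 ≤ m) {R : ℝ} (hR : 0 ≤ R) :
    exp (m * R) - 1 - m ^ 2 * R * exp ((m - 1) * R) ≤ m * 2 ^ m * ∫ s in (0:ℝ)..R, sinh s ^ m := by
  have hm1 : (1:ℝ) ≤ m := by exact_mod_cast hm
  have hpt : ∀ s ∈ Set.Icc 0 R,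
      exp (m * s) / 2 ^ m - m * exp ((m - 1) * R) / 2 ^ m ≤ sinh s ^ m := fun s hs => by
    have : exp ((m - 2) * s) ≤ exp ((m - 1) * R) := exp_le_exp.2 (by nlinarith [hs.1, hs.2])
    have := le_sinh_pow m hs.1
    have : m * exp ((m - 2) * s) / 2 ^ m ≤ m * exp ((m - 1) * R) / 2 ^ m := by gcongr
    linarith
  have hmono : ∫ s in (0:ℝ)..R, (exp (m * s) / 2 ^ m - m * exp ((m - 1) * R) / 2 ^ m)
      ≤ ∫ s in (0:ℝ)..R, sinh s ^ m := intervalIntegral.integral_mono_on hR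
      ((by fun_prop : Continuous _).intervalIntegrable _ _)
      ((by fun_prop : Continuous _).intervalIntegrable _ _) hpt
  rw [intervalIntegral.integral_sub
    ((by fun_prop : Continuous _).intervalIntegrable _ _) intervalIntegrable_const,
    intervalIntegral.integral_div, integral_exp_const_mul (by positivity),
    intervalIntegral.integral_const, smul_eq_mul] at hmono
  calc exp (m * R) - 1 - m ^ 2 * R * exp ((m - 1) * R)
      = m * 2 ^ m * ((exp (m * R) - 1) / m / 2 ^ m - (R - 0) * (m * exp ((m - 1) * R) / 2 ^ m)) := by
        field_simp; ring
    _ ≤ m * 2 ^ m * ∫ s in (0:ℝ)..R, sinh s ^ m := by gcongr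

lemma volRatio_nonneg (m : ℕ) {R : ℝ} (hR : 0 ≤ R) : 0 ≤ volRatio m R := by
  have : 0 ≤ ∫ s in (0:ℝ)..R, sinh s ^ m :=
    intervalIntegral.integral_nonneg hR fun s hs => pow_nonneg (sinh_nonneg_iff.2 hs.1) m
  unfold volRatio; positivity

lemma volRatio_eq (m : ℕ) (R : ℝ) :
    volRatio m R = exp (-(m * R)) * (m * 2 ^ m * ∫ s in (0:ℝ)..R, sinh s ^ m) := by
  unfold volRatio; ring

lemma volRatio_le_one {m : ℕ} (hm : m ≠ 0) {R : ℝ} (hR : 0 ≤ R) : volRatio m R ≤ 1 := by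
  calc volRatio m R ≤ exp (-(m * R)) * (exp (m * R) - 1) := by
        rw [volRatio_eq]; gcongr; exact mul_integral_sinh_pow_le hm hR
    _ = 1 - exp (-(m * R)) := by rw [mul_sub, ← exp_add]; simp
    _ ≤ 1 := by linarith [exp_pos (-(m * R))]

lemma one_sub_volRatio_le {m : ℕ} (hm : 1 ≤ m) {R : ℝ} (hR : 0 < R) :
    1 - volRatio m R ≤ (1 + 2 * m ^ 2) / R := by
  have hm1 : (1:ℝ) ≤ m := by exact_mod_cast hm
  have hlower : 1 - exp (-(m * R)) - m ^ 2 * R * exp (-R) ≤ volRatio m R := by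
    calc 1 - exp (-(m * R)) - m ^ 2 * R * exp (-R)
        = exp (-(m * R)) * (exp (m * R) - 1 - m ^ 2 * R * exp ((m - 1) * R)) := by
          have e1 : exp (-(m * R)) * exp (m * R) = 1 := by rw [← exp_add]; simp
          have e2 : exp (-(m * R)) * exp ((m - 1) * R) = exp (-R) := by rw [← exp_add]; ring_nf
          linear_combination -e1 + m ^ 2 * R * e2
      _ ≤ volRatio m R := by
          rw [volRatio_eq]; gcongr; exact exp_sub_le_mul_integral_sinh_pow hm hR.le
  have hexp_mR : exp (-(m * R)) ≤ exp (-R) := exp_le_exp.2 (by nlinarith)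
  have h1 : R * exp (-R) ≤ 1 := by
    rw [exp_neg, ← div_eq_mul_inv, div_le_one (exp_pos R)]; linarith [add_one_le_exp R]
  have h2 : R ^ 2 * exp (-R) ≤ 2 := by
    have := pow_div_factorial_le_exp (x := R) hR.le 2
    rw [exp_neg, ← div_eq_mul_inv, div_le_iff₀ (exp_pos R)]
    norm_num [Nat.factorial] at this; linarith
  rw [le_div_iff₀ hR]
  nlinarith [mul_le_mul_of_nonneg_left hexp_mR hR.le, mul_le_mul_of_nonneg_left h2 (sq_nonneg (m:ℝ))]

lemma omegaSphere_pos {d : ℕ} (hd : 0 < d) : 0 < omegaSphere d := by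
  have : 0 < Gamma ((d : ℝ) / 2) := Gamma_pos_of_pos (by positivity)
  unfold omegaSphere; positivity

lemma rhoDensity_succ (m k : ℕ) (R u : ℝ) :
    rhoDensity (m + 1) k R u =
      exp (-u) * volRatio m R * ((u + vThreshold (m + 1) k R) / (R * m)) ^ (k - 1) := by
  have hω := (omegaSphere_pos m.succ_pos).ne'
  simp only [rhoDensity, hypBallVol, volRatio, Nat.add_sub_cancel, Nat.cast_add, Nat.cast_one,
    add_sub_cancel_right]
  field_simp

lemma vThreshold_succ_succ {m : ℕ} (hm : 0 < m) (n : ℕ) {R : ℝ} (hR : 0 < R) :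
    vThreshold (m + 1) (n + 1) R = R * m + n * log R
      - (log (n.factorial * 2 ^ m * m / omegaSphere (m + 1)) - n * log m) := by
  simp only [vThreshold, Nat.add_sub_cancel, Nat.cast_add, Nat.cast_one, add_sub_cancel_right]
  rw [log_mul hR.ne' (by positivity)]
  ring

lemma rhoDensity_succ_succ {m : ℕ} (hm : 0 < m) (n : ℕ) {R : ℝ} (hR : 0 < R) (u : ℝ) :
    rhoDensity (m + 1) (n + 1) R u = exp (-u) * volRatio m R * (1 + (u + n * log R
      - (log (n.factorial * 2 ^ m * m / omegaSphere (m + 1)) - n * log m)) / (R * m)) ^ n := by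
  have : (m:ℝ) ≠ 0 := by positivity
  rw [rhoDensity_succ, vThreshold_succ_succ hm n hR, Nat.add_sub_cancel]
  field_simp
  ring_nf

lemma abs_mul_sub_one_le {A B : ℝ} (hA0 : 0 ≤ A) (hA1 : A ≤ 1) (hB : 1 ≤ B) :
    |A * B - 1| ≤ (1 - A) + (B - 1) := by
  rw [abs_le]; constructor <;> nlinarith

lemma one_add_pow_sub_one_le (n : ℕ) {t : ℝ} (ht : 0 ≤ t) :
    (1 + t) ^ n - 1 ≤ n * t * exp (n * t) := by
  have hpow : (1 + t) ^ n ≤ exp (n * t) := by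
    rw [exp_nat_mul]; gcongr; linarith [add_one_le_exp t]
  have h := mul_le_mul_of_nonneg_left (add_one_le_exp (-(n * t))) (exp_pos (n * t)).le
  rw [mul_add, ← exp_add, add_neg_cancel, exp_zero] at h
  nlinarith

lemma one_add_mul_exp_neg_le (s : ℝ) : (1 + s) * exp (-(s / 4)) ≤ 4 := by
  calc (1 + s) * exp (-(s / 4)) ≤ 4 * exp (s / 4) * exp (-(s / 4)) := by
        gcongr; linarith [add_one_le_exp (s / 4)]
    _ = 4 := by rw [mul_assoc, ← exp_add, add_neg_cancel, exp_zero, mul_one]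

lemma abs_mul_one_add_pow_sub_one_mul_exp_neg_le (n : ℕ) {A ε a W s : ℝ} (hA0 : 0 ≤ A)
    (hA1 : A ≤ 1) (hε : 1 - A ≤ ε) (ha : 0 < a) (h2n : 2 * n ≤ a) (hW : 1 ≤ W)
    (hnW : n * W ≤ a) (hs : 0 ≤ s) :
    |A * (1 + (s + W - 1) / a) ^ n - 1| * exp (-s)
      ≤ (ε + 4 * exp 1 * (n * W / a)) * exp (-(s / 4)) := by
  set t := (s + W - 1) / a with ht
  have ht0 : 0 ≤ t := div_nonneg (by linarith) ha.le
  have hnt : n * t ≤ s / 2 + 1 := by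
    rw [ht, mul_div_assoc', div_le_iff₀ ha]; nlinarith
  have htW : t ≤ (1 + s) * (W / a) := by
    rw [ht, mul_div_assoc', div_le_div_iff_of_pos_right ha]; nlinarith
  have hε_exp : ε * exp (-s) ≤ ε * exp (-(s / 4)) := by
    gcongr <;> linarith
  have hpow_exp : n * t * exp (n * t) * exp (-s) ≤ 4 * exp 1 * (n * W / a) * exp (-(s / 4)) := by
    have hsplit : exp (s / 2 + 1) * exp (-s) = exp 1 * exp (-(s / 4)) * exp (-(s / 4)) := by
      simp only [← exp_add]; ring_nf
    calc n * t * exp (n * t) * exp (-s) ≤ n * ((1 + s) * (W / a)) * exp (s / 2 + 1) * exp (-s) := by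
          gcongr
      _ = exp 1 * (n * W / a) * ((1 + s) * exp (-(s / 4))) * exp (-(s / 4)) := by
          rw [mul_assoc _ (exp _), hsplit]; ring
      _ ≤ exp 1 * (n * W / a) * 4 * exp (-(s / 4)) := by
          gcongr; exact one_add_mul_exp_neg_le s
      _ = 4 * exp 1 * (n * W / a) * exp (-(s / 4)) := by ring
  have hB : 1 ≤ (1 + t) ^ n := one_le_pow₀ (by linarith)
  calc |A * (1 + t) ^ n - 1| * exp (-s) ≤ ((1 - A) + ((1 + t) ^ n - 1)) * exp (-s) := by
        gcongr; exact abs_mul_sub_one_le hA0 hA1 hB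
    _ ≤ (ε + n * t * exp (n * t)) * exp (-s) := by
        gcongr; exact one_add_pow_sub_one_le n ht0
    _ ≤ (ε + 4 * exp 1 * (n * W / a)) * exp (-(s / 4)) := by linarith

lemma eventually_mul_log_le (q : ℝ) : ∀ᶠ x in atTop, q * log x ≤ x := by
  filter_upwards [(isLittleO_log_id_atTop.const_mul_left q).bound one_pos,
    eventually_ge_atTop 0] with x hx hx0
  rw [Real.norm_eq_abs, Real.norm_eq_abs, id, one_mul, abs_of_nonneg hx0] at hx
  exact (le_abs_self _).trans hx

lemma eventually_one_le_add_mul_log (P : ℝ) {n : ℝ} (hn : 1 ≤ n) :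
    ∀ᶠ R in atTop, 1 ≤ log R ∧ 2 * n ≤ R ∧ 1 ≤ P + n * log R ∧
      P + n * log R ≤ (|P| + n) * log R ∧ n * (P + n * log R) ≤ R := by
  filter_upwards [eventually_ge_atTop (2 * n), tendsto_log_atTop.eventually_ge_atTop (1 + |P|),
    eventually_mul_log_le (n * (|P| + n))] with R h2n hlogP hlogR
  have hlog : 1 ≤ log R := by linarith [abs_nonneg P]
  have hWlog : P + n * log R ≤ (|P| + n) * log R := by nlinarith [le_abs_self P, abs_nonneg P]
  refine ⟨hlog, h2n, by nlinarith [neg_abs_le P], hWlog, ?_⟩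
  calc n * (P + n * log R) ≤ n * ((|P| + n) * log R) := by gcongr
    _ = n * (|P| + n) * log R := by ring
    _ ≤ R := hlogR

lemma setIntegral_Ioi_abs_le_of_le_mul_exp {f : ℝ → ℝ} {c M : ℝ}
    (hf : ∀ u > c, |f u| ≤ M * exp (-((u - c) / 4))) :
    ∫ u in Set.Ioi c, |f u| ≤ 4 * M := by
  have hshift : ∀ u, exp (-((u - c) / 4)) = exp (c / 4) * exp (-(1 / 4) * u) := fun u => by
    rw [← exp_add]; ring_nf
  have hint : IntegrableOn (fun u => exp (-((u - c) / 4))) (Set.Ioi c) := by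
    simp_rw [hshift]
    exact (integrableOn_exp_mul_Ioi (by norm_num) c).const_mul _
  calc ∫ u in Set.Ioi c, |f u| ≤ ∫ u in Set.Ioi c, M * exp (-((u - c) / 4)) :=
        integral_mono_of_nonneg (.of_forall fun u => abs_nonneg _) (hint.const_mul M)
          ((ae_restrict_iff' measurableSet_Ioi).2 (.of_forall hf))
    _ = 4 * M := by
        simp_rw [hshift, integral_const_mul, integral_exp_mul_Ioi (by norm_num : -(1 / 4 : ℝ) < 0)]
        have : exp (c / 4) * exp (-(1 / 4) * c) = 1 := by rw [← exp_add]; ring_nf; simp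
        linear_combination 4 * M * this

theorem exists_abs_rhoDensity_sub_exp_le {d k : ℕ} (hd : 2 ≤ d) (hk : 2 ≤ k) (c : ℝ) :
    ∃ K > 0, ∀ᶠ R in atTop, ∀ u > c,
      |rhoDensity d k R u - exp (-u)| ≤ K * (log R / R) * exp (-((u - c) / 4)) := by
  obtain ⟨m, rfl⟩ : ∃ m, d = m + 1 := ⟨d - 1, by omega⟩
  obtain ⟨n, rfl⟩ : ∃ n, k = n + 1 := ⟨k - 1, by omega⟩
  have hm : (1:ℝ) ≤ m := by exact_mod_cast (by omega : 1 ≤ m)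
  have hn : (1:ℝ) ≤ n := by exact_mod_cast (by omega : 1 ≤ n)
  set L := log (n.factorial * 2 ^ m * m / omegaSphere (m + 1)) - n * log m
  set P := 1 + c - L
  set K₀ := 1 + 2 * m ^ 2 + 4 * exp 1 * (n * (|P| + n))
  refine ⟨exp (-c) * K₀, by positivity, ?_⟩
  filter_upwards [eventually_one_le_add_mul_log P hn] with R ⟨hlog, h2n, hW1, hWlog, hnW⟩ u hu
  have hR : 0 < R := by linarith
  set W := P + n * log R
  set a := R * m
  have hRa : R ≤ a := by nlinarith
  have hcore := abs_mul_one_add_pow_sub_one_mul_exp_neg_le n (a := a) (volRatio_nonneg m hR.le)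
    (volRatio_le_one (by omega) hR.le) (one_sub_volRatio_le (by omega) hR) (by positivity)
    (by linarith) hW1 (by linarith) (sub_nonneg.2 hu.le)
  have hrho : rhoDensity (m + 1) (n + 1) R u - exp (-u)
      = exp (-c) * (exp (-(u - c)) * (volRatio m R * (1 + (u - c + W - 1) / a) ^ n - 1)) := by
    rw [rhoDensity_succ_succ (by omega) n hR,
      show exp (-u) = exp (-c) * exp (-(u - c)) by rw [← exp_add]; ring_nf]
    simp only [W, P, L, a]
    ring_nf
  have hbracket : (1 + 2 * m ^ 2) / R + 4 * exp 1 * (n * W / a) ≤ K₀ * (log R / R) := by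
    have h1 : (1 + 2 * m ^ 2) / R ≤ (1 + 2 * m ^ 2) * (log R / R) := by
      rw [mul_div_assoc']; gcongr; nlinarith
    have h2 : n * W / a ≤ n * (|P| + n) * (log R / R) := by
      rw [mul_div_assoc', div_le_div_iff₀ (by positivity) hR]
      have hnWlog : n * W ≤ n * (|P| + n) * log R := by
        rw [mul_assoc]; exact mul_le_mul_of_nonneg_left hWlog (by positivity)
      exact mul_le_mul hnWlog hRa hR.le (by positivity)
    calc (1 + 2 * m ^ 2) / R + 4 * exp 1 * (n * W / a)
        ≤ (1 + 2 * m ^ 2) * (log R / R) + 4 * exp 1 * (n * (|P| + n) * (log R / R)) := by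
          gcongr
      _ = K₀ * (log R / R) := by ring
  calc |rhoDensity (m + 1) (n + 1) R u - exp (-u)|
      = exp (-c) * (|volRatio m R * (1 + (u - c + W - 1) / a) ^ n - 1| * exp (-(u - c))) := by
        rw [hrho, abs_mul, abs_mul, abs_of_pos (exp_pos _), abs_of_pos (exp_pos _)]; ring
    _ ≤ exp (-c) * (K₀ * (log R / R) * exp (-((u - c) / 4))) :=
        mul_le_mul_of_nonneg_left
          (hcore.trans (mul_le_mul_of_nonneg_right hbracket (exp_pos _).le)) (exp_pos _).le
    _ = exp (-c) * K₀ * (log R / R) * exp (-((u - c) / 4)) := by ring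

theorem stmt_15 (d k : ℕ) (hd : 2 ≤ d) (hk : 2 ≤ k) (c : ℝ) :
    ∃ C R₀ : ℝ, 0 < C ∧ 0 < R₀ ∧ ∀ R : ℝ, R₀ ≤ R →
      (∫ u in Set.Ioi c, |rhoDensity d k R u - Real.exp (-u)|) ≤ C * Real.log R / R := by
  obtain ⟨K, hK, hbound⟩ := exists_abs_rhoDensity_sub_exp_le hd hk c
  obtain ⟨R₀, hR₀⟩ := hbound.exists_forall_of_atTop
  refine ⟨4 * K, max R₀ 1, by positivity, by positivity, fun R hR => ?_⟩
  calc ∫ u in Set.Ioi c, |rhoDensity d k R u - exp (-u)|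
      ≤ 4 * (K * (log R / R)) :=
        setIntegral_Ioi_abs_le_of_le_mul_exp (hR₀ R (le_of_max_le_left hR))
    _ = 4 * K * log R / R := by ring
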